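/- arXiv:0807.0038 — 3 statements merged into one kernel-verified Lean document; each statement's English description precedes it below -/
import Mathlib

section
/- Let G=(N,L) be a directed graph with weights w and potentials l, and suppose two demands share the same origin s and each is routed on a path satisfying the unique-shortest-path length conditions: along each routing path every edge (i,j) is tight (l(j) = l(i) + w(i,j)), and for every edge (i,j) not on a given demand's routing path whose head j is on that path, the strict inequality l(j) < l(i) + w(i,j) holds. Then the two routing paths cannot traverse two edge-disjoint subpaths between a common pair of nodes u and v; i.e., any two routing paths from the same origin that both visit nodes u and v coincide between u and v. -/
/-!
An edge `(a, b)` of `P₂` entering a node `b` of `P₁` must be an edge of `P₁`: it is tight for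
`l`, whereas every other edge into `b` is strict. Walking `q` backwards from `v ∈ P₁`, every edge
of `q` therefore lies on `P₁`, so `q` is a segment of the simple path `P₁`; and a segment of a
simple path is determined by its endpoints.
-/

namespace List
variable {α : Type*}

theorem Nodup.eq_of_eq_append_cons {l s t s' t' : List α} {a : α} (hl : l.Nodup)
    (h : l = s ++ a :: t) (h' : l = s' ++ a :: t') : s = s' ∧ t = t' := by
  classical
  subst h
  have hs : a ∉ s := fun ha => (nodup_middle.1 hl).notMem (mem_append_left t ha)
  have hs' : a ∉ s' := fun ha => (nodup_middle.1 (h' ▸ hl)).notMem (mem_append_left t' ha)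
  have hlen : s.length = s'.length := by
    simpa [idxOf_append_of_notMem hs, idxOf_append_of_notMem hs'] using congrArg (idxOf a) h'
  obtain ⟨hs, hat⟩ := append_inj h' hlen
  exact ⟨hs, (cons_inj_right a).1 hat⟩

theorem Nodup.eq_of_prefix_of_getLast?_eq {l x y : List α} (hl : l.Nodup) (hx : x <+: l)
    (hy : y <+: l) (h : x.getLast? = y.getLast?) : x = y := by
  wlog hxy : x <+: y generalizing x y
  · exact (this hy hx h.symm ((prefix_or_prefix_of_prefix hx hy).resolve_left hxy)).symm
  rcases eq_or_ne y [] with rfl | hy₀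
  · exact prefix_nil.1 hxy
  refine Nodup.eq_of_getLast_mem_of_prefix hxy (hne := hy₀) ?_ (hy.nodup hl)
  exact mem_of_getLast? (h.trans (getLast?_eq_some_getLast hy₀))

theorem Nodup.eq_of_infix_of_head?_eq_of_getLast?_eq {l x y : List α} (hl : l.Nodup)
    (hx : x <:+: l) (hy : y <:+: l) (hh : x.head? = y.head?) (hh' : x.getLast? = y.getLast?) :
    x = y := by
  obtain ⟨s, t, hst⟩ := hx
  obtain ⟨s', t', hst'⟩ := hy
  cases x with
  | nil => simpa [eq_comm] using hh
  | cons a x =>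
  cases y with
  | nil => simp at hh
  | cons b y =>
  obtain rfl : a = b := by simpa using hh
  have htail := (hl.eq_of_eq_append_cons (by simpa using hst.symm) (by simpa using hst'.symm)).2
  have hnd : (a :: (x ++ t)).Nodup := (infix_append s _ []).nodup (by simpa [← hst] using hl)
  exact hnd.eq_of_prefix_of_getLast?_eq (prefix_append (a :: x) t)
    (htail ▸ prefix_append (a :: y) t') hh'

theorem Nodup.append_pair_infix {l x : List α} {a b : α} (hl : l.Nodup) (hx : x ++ [a] <:+: l)
    (hab : [a, b] <:+: l) : x ++ [a, b] <:+: l := by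
  obtain ⟨s, t, hst⟩ := hx
  obtain ⟨s', t', hst'⟩ := hab
  obtain ⟨-, rfl⟩ := hl.eq_of_eq_append_cons (s := s ++ x) (by simpa using hst.symm)
    (by simpa using hst'.symm)
  exact ⟨s, t', by simpa using hst⟩

theorem mem_zip_tail_iff_pair_infix {l : List α} {a b : α} :
    (a, b) ∈ l.zip l.tail ↔ [a, b] <:+: l := by
  induction l with
  | nil => simp
  | cons x l ih =>
    cases l with
    | nil => simpa using fun h : [a, b] <:+: [x] => h.length_le
    | cons y l =>
      rw [infix_cons_iff, ← ih]
      simp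

theorem Nodup.infix_of_forall_pair_infix {l q : List α} (hl : l.Nodup)
    (hq : ∀ a b, [a, b] <:+: q → b ∈ l → [a, b] <:+: l) (hlast : ∀ v ∈ q.getLast?, v ∈ l) :
    q <:+: l := by
  induction q using reverseRecOn with
  | nil => exact nil_infix
  | append_singleton q b ih =>
    have hb : b ∈ l := hlast b (by simp)
    rcases q.eq_nil_or_concat' with rfl | ⟨q, a, rfl⟩
    · exact (singleton_infix_iff b l).2 hb
    have hab : [a, b] <:+: l := hq a b ⟨q, [], by simp⟩ hb
    have hqa : q ++ [a] <:+: l := by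
      refine ih (fun c d hcd => hq c d (hcd.trans (prefix_append _ [b]).isInfix)) ?_
      simpa using hab.subset (mem_cons_self ..)
    simpa using hl.append_pair_infix hqa hab

end List

theorem subpath_optimality_general {V : Type}
    (L : V → V → Prop) (w : V → V → ℝ) (l : V → ℝ)
    (P₁ P₂ : List V) (u v : V)
    (hchain₂ : P₂.Chain' L)
    (hnd₁ : P₁.Nodup)
    (htight₂ : ∀ e ∈ P₂.zip P₂.tail, l e.2 = l e.1 + w e.1 e.2)
    (hstrict₁ : ∀ i j, L i j → j ∈ P₁ → (i, j) ∉ P₁.zip P₁.tail → l j < l i + w i j)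
    (p q : List V)
    (hp : p <:+: P₁) (hq : q <:+: P₂)
    (hpu : p.head? = some u) (hpv : p.getLast? = some v)
    (hqu : q.head? = some u) (hqv : q.getLast? = some v) :
    p = q := by
  have hedge : ∀ a b, [a, b] <:+: q → b ∈ P₁ → [a, b] <:+: P₁ := by
    intro a b hab hb
    have hab₂ : [a, b] <:+: P₂ := hab.trans hq
    have hLab : L a b := List.isChain_pair.1 (hchain₂.infix hab₂)
    have htight := htight₂ (a, b) (List.mem_zip_tail_iff_pair_infix.2 hab₂)
    rw [← List.mem_zip_tail_iff_pair_infix]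
    by_contra hab₁
    exact (hstrict₁ a b hLab hb hab₁).ne htight
  have hv : v ∈ P₁ := hp.subset (List.mem_of_getLast? hpv)
  have hqP : q <:+: P₁ := hnd₁.infix_of_forall_pair_infix hedge (by simpa [hqv] using hv)
  exact hnd₁.eq_of_infix_of_head?_eq_of_getLast?_eq hp hqP (hpu.trans hqu.symm)
    (hpv.trans hqv.symm)

/-- Sub-path consistency of unique shortest path routing: two simple routing paths from
the same origin `s`, each satisfying the unique-shortest-path length conditions
(all path edges tight; strict inequality on edges entering visited nodes that are not
path edges; weak inequality on all edges), coincide on any common subpath endpoints: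
a subpath of one from `u` to `v` equals a subpath of the other from `u` to `v`. -/
theorem subpath_optimality {V : Type} [DecidableEq V]
    (L : V → V → Prop) (w : V → V → ℝ) (l : V → ℝ) (s : V) (hls : l s = 0)
    (hfeas : ∀ i j, L i j → l j ≤ l i + w i j)
    (P₁ P₂ : List V) (u v : V)
    (hP₁s : P₁.head? = some s) (hP₂s : P₂.head? = some s)
    (hchain₁ : P₁.Chain' L) (hchain₂ : P₂.Chain' L)
    (hnd₁ : P₁.Nodup) (hnd₂ : P₂.Nodup)
    (htight₁ : ∀ e ∈ P₁.zip P₁.tail, l e.2 = l e.1 + w e.1 e.2)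
    (htight₂ : ∀ e ∈ P₂.zip P₂.tail, l e.2 = l e.1 + w e.1 e.2)
    (hstrict₁ : ∀ i j, L i j → j ∈ P₁ → (i, j) ∉ P₁.zip P₁.tail → l j < l i + w i j)
    (hstrict₂ : ∀ i j, L i j → j ∈ P₂ → (i, j) ∉ P₂.zip P₂.tail → l j < l i + w i j)
    (p q : List V)
    (hp : p <:+: P₁) (hq : q <:+: P₂)
    (hpu : p.head? = some u) (hpv : p.getLast? = some v)
    (hqu : q.head? = some u) (hqv : q.getLast? = some v) :
    p = q :=
  subpath_optimality_general L w l P₁ P₂ u v hchain₂ hnd₁ htight₂ hstrict₁ p q hp hq hpu hpv hqu hqv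
end

section
/- Let x : D × L → {0,1} be a feasible solution to the relaxed demand-based model (flow conservation for each demand, capacity constraints, and sub-path optimality constraints). For each origin s define y(s,e) = max over demands k with origin s of x(k,e), and f(s,e) = ∑ over demands k with origin s of d_k·x(k,e). Then (y,f) is a feasible solution to the relaxed origin-based model: f satisfies aggregated flow conservation (net outflow d_s = ∑_{k ∈ D_s} d_k at s, net inflow d_k at each destination t_k of D_s, balance elsewhere), f(s,e) ≤ y(s,e)·d_s for every edge, ∑_s f(s,e) ≤ c(e), and for each origin s, each node has at most one incoming edge with y = 1 (exactly one at destinations of D_s, none at s). -/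
/-!
Conservation of the aggregated flow is linearity, the flow bound is `x k e ≤ max_k x k e`,
capacity is a regrouping of the sum over demands, and at a destination `t_k` the unit of flow
of demand `k` forces an incoming `y`-edge, which the sub-path constraint makes unique. The one
real point is that no flow of a demand enters its origin `s`: such an edge could be followed
backwards forever, because every vertex other than `s` that sends flow also receives flow, so in
the finite graph the backward walk closes a cycle of the support, contradicting acyclicity.
-/

open Finset Function

namespace Function

variable {α : Type*}

theorem exists_iterate_mem_periodicPts [Finite α] (f : α → α) (x : α) :
    ∃ n, f^[n] x ∈ periodicPts f := by
  obtain ⟨a, b, hab, heq⟩ := Finite.exists_ne_map_eq_of_infinite (f^[·] x)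
  wlog hlt : a < b generalizing a b
  · exact this b a hab.symm heq.symm (hab.lt_or_gt.resolve_left hlt)
  refine ⟨a, mk_mem_periodicPts (Nat.sub_pos_of_lt hlt) ?_⟩
  rw [IsPeriodicPt, IsFixedPt, ← iterate_add_apply, Nat.sub_add_cancel hlt.le]
  exact heq.symm

theorem exists_cycle_of_mem_periodicPts {f : α → α} {y : α} (hy : y ∈ periodicPts f) :
    ∃ C : List α, C ≠ [] ∧ C.Nodup ∧ ∀ e ∈ C.zip (C.rotate 1), e.1 = f e.2 := by
  set m := minimalPeriod f y
  have hm : 0 < m := minimalPeriod_pos_of_mem_periodicPts hy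
  set C := ((List.range m).map (f^[·] y)).reverse
  have hlen : C.length = m := by simp [C]
  have hget : ∀ j (hj : j < C.length), C[j] = f^[m - 1 - j] y := by
    intro j hj
    simp [C, List.getElem_reverse]
  refine ⟨C, ?_, ?_, ?_⟩
  · rw [← List.length_pos_iff, hlen]; exact hm
  · rw [List.nodup_reverse]
    exact (Cycle.nodup_coe_iff).1 nodup_periodicOrbit
  · intro e he
    obtain ⟨j, hj, rfl⟩ := List.mem_iff_getElem.1 he
    simp only [List.length_zip, List.length_rotate, min_self] at hj
    rw [List.getElem_zip, List.getElem_rotate, hget, hget]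
    simp only [hlen]
    rcases Nat.lt_or_ge (j + 1) m with hj1 | hj1
    · rw [Nat.mod_eq_of_lt hj1, ← iterate_succ_apply' f]
      congr 1; omega
    · rw [show j + 1 = m by omega, Nat.mod_self, show m - 1 - j = 0 by omega, iterate_zero_apply,
        ← iterate_succ_apply' f, show (m - 1 - 0).succ = m by omega, iterate_minimalPeriod]

end Function

theorem exists_cycle_of_forall_exists_pred {α : Type*} [Finite α] [Nonempty α] {r : α → α → Prop}
    (h : ∀ v, ∃ u, r u v) :
    ∃ C : List α, C ≠ [] ∧ C.Nodup ∧ ∀ e ∈ C.zip (C.rotate 1), r e.1 e.2 := by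
  choose g hg using h
  obtain ⟨n, hn⟩ := exists_iterate_mem_periodicPts g (Classical.arbitrary α)
  obtain ⟨C, hne, hnd, hcyc⟩ := exists_cycle_of_mem_periodicPts hn
  exact ⟨C, hne, hnd, fun e he => hcyc e he ▸ hg e.2⟩

theorem Set.Nonempty.exists_cycle_of_forall_exists_pred {α : Type*} [Finite α] {r : α → α → Prop}
    {P : Set α} (hP : P.Nonempty) (h : ∀ v ∈ P, ∃ u ∈ P, r u v) :
    ∃ C : List α, C ≠ [] ∧ C.Nodup ∧ ∀ e ∈ C.zip (C.rotate 1), r e.1 e.2 := by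
  have : Nonempty P := hP.to_subtype
  obtain ⟨C, hne, hnd, hcyc⟩ :=
    _root_.exists_cycle_of_forall_exists_pred (r := fun u v : P => r u v)
      fun v => (h v v.2).elim fun u hu => ⟨⟨u, hu.1⟩, hu.2⟩
  refine ⟨C.map (↑), mt List.map_eq_nil_iff.1 hne, hnd.map Subtype.val_injective, ?_⟩
  rw [← List.map_rotate, List.zip_map]
  simp only [List.mem_map, Prod.exists]
  rintro _ ⟨u, v, huv, rfl⟩
  exact hcyc _ huv

section Flow

variable {V : Type*} [DecidableEq V]

def inflow {M : Type*} [AddCommMonoid M] (L : Finset (V × V)) (z : V × V → M) (i : V) : M :=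
  ∑ e ∈ L.filter (fun e => e.2 = i), z e

def outflow {M : Type*} [AddCommMonoid M] (L : Finset (V × V)) (z : V × V → M) (i : V) : M :=
  ∑ e ∈ L.filter (fun e => e.1 = i), z e

def IsUnitFlow (L : Finset (V × V)) (z : V × V → ℕ) (s t : V) : Prop :=
  ∀ i, inflow L (fun e => (z e : ℤ)) i - outflow L (fun e => (z e : ℤ)) i =
    if i = s then -1 else if i = t then 1 else 0

variable {L : Finset (V × V)}

theorem natCast_inflow {R : Type*} [AddCommMonoidWithOne R] (z : V × V → ℕ) (i : V) :
    ((inflow L z i : ℕ) : R) = inflow L (fun e => (z e : R)) i :=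
  Nat.cast_sum _ _

theorem natCast_outflow {R : Type*} [AddCommMonoidWithOne R] (z : V × V → ℕ) (i : V) :
    ((outflow L z i : ℕ) : R) = outflow L (fun e => (z e : R)) i :=
  Nat.cast_sum _ _

theorem IsUnitFlow.outflow_le_inflow {z : V × V → ℕ} {s t : V} (h : IsUnitFlow L z s t) {i : V}
    (hi : i ≠ s) : outflow L z i ≤ inflow L z i := by
  have hnet := h i
  rw [if_neg hi, ← natCast_inflow, ← natCast_outflow] at hnet
  split_ifs at hnet <;> omega

theorem IsUnitFlow.one_le_inflow_target {z : V × V → ℕ} {s t : V} (h : IsUnitFlow L z s t)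
    (hst : s ≠ t) : 1 ≤ inflow L z t := by
  have hnet := h t
  rw [if_neg hst.symm, if_pos rfl, ← natCast_inflow, ← natCast_outflow] at hnet
  omega

theorem exists_cycle_of_flow_into_source [Finite V] (z : V × V → ℕ) {s : V}
    (hbal : ∀ i, i ≠ s → outflow L z i ≤ inflow L z i) {e : V × V} (he : e ∈ L) (hes : e.2 = s)
    (hze : z e ≠ 0) :
    ∃ C : List V, C ≠ [] ∧ C.Nodup ∧ ∀ e ∈ C.zip (C.rotate 1), e ∈ L ∧ z e ≠ 0 := by
  set P : Set V := {v | ∃ u, (u, v) ∈ L ∧ z (u, v) ≠ 0}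
  have hs : s ∈ P := ⟨e.1, by rw [← hes]; exact ⟨he, hze⟩⟩
  refine Set.Nonempty.exists_cycle_of_forall_exists_pred
    (r := fun u v => (u, v) ∈ L ∧ z (u, v) ≠ 0) ⟨s, hs⟩ ?_
  rintro v ⟨u, huv, hz⟩
  refine ⟨u, ?_, huv, hz⟩
  by_cases hu : u = s
  · exact hu ▸ hs
  have hout : 0 < outflow L z u := (Nat.pos_of_ne_zero hz).trans_le <|
    single_le_sum (fun _ _ => Nat.zero_le _) (mem_filter.2 ⟨huv, rfl⟩)
  obtain ⟨e', he', hz'⟩ := exists_ne_zero_of_sum_ne_zero (hout.trans_le (hbal u hu)).ne'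
  obtain ⟨he'L, rfl⟩ := mem_filter.1 he'
  exact ⟨e'.1, he'L, hz'⟩

theorem IsUnitFlow.eq_zero_of_snd_eq_source [Finite V] {z : V × V → ℕ} {s t : V}
    (h : IsUnitFlow L z s t) (hz : ∀ e, z e ≤ 1)
    (hacyc : ¬ ∃ C : List V, C ≠ [] ∧ C.Nodup ∧ ∀ e ∈ C.zip (C.rotate 1), e ∈ L ∧ z e = 1)
    {e : V × V} (he : e ∈ L) (hes : e.2 = s) : z e = 0 := by
  by_contra hze
  obtain ⟨C, hne, hnd, hC⟩ :=
    exists_cycle_of_flow_into_source z (fun _ => h.outflow_le_inflow) he hes hze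
  exact hacyc ⟨C, hne, hnd, fun e he =>
    ⟨(hC e he).1, (hz e).antisymm (Nat.one_le_iff_ne_zero.2 (hC e he).2)⟩⟩

theorem inflow_sub_outflow_sum_mul {D : Type*} {x : D → V × V → ℕ} {sk tk : D → V}
    (hflow : ∀ k, IsUnitFlow L (x k) (sk k) (tk k)) (hst : ∀ k, sk k ≠ tk k) (d : D → ℝ)
    (S : Finset D) (i : V) :
    inflow L (fun e => ∑ k ∈ S, d k * (x k e : ℝ)) i
        - outflow L (fun e => ∑ k ∈ S, d k * (x k e : ℝ)) i
      = ∑ k ∈ S, ((if tk k = i then d k else 0) - if sk k = i then d k else 0) := by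
  unfold inflow outflow
  rw [sum_comm, sum_comm (s := L.filter _), ← sum_sub_distrib]
  refine sum_congr rfl fun k _ => ?_
  have hk := congrArg (Int.cast : ℤ → ℝ) (hflow k i)
  unfold inflow outflow at hk
  push_cast at hk
  rw [← mul_sum, ← mul_sum, ← mul_sub, hk]
  by_cases hs : i = sk k
  · subst hs
    simp [(hst k).symm]
  by_cases ht : i = tk k
  · subst ht
    simp [hs, Ne.symm hs]
  · simp [hs, ht, Ne.symm hs, Ne.symm ht]

end Flow

theorem sum_mul_le_sup_mul_sum {ι : Type*} (S : Finset ι) {d : ι → ℝ} (hd : ∀ k ∈ S, 0 ≤ d k)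
    (a : ι → ℕ) : ∑ k ∈ S, d k * (a k : ℝ) ≤ ((S.sup a : ℕ) : ℝ) * ∑ k ∈ S, d k := by
  rw [mul_sum]
  refine sum_le_sum fun k hk => ?_
  rw [mul_comm]
  exact mul_le_mul_of_nonneg_right (by exact_mod_cast le_sup hk) (hd k hk)

theorem demand_to_origin_feasible_general {V D : Type} [Fintype V] [DecidableEq V] [Fintype D]
    (L : Finset (V × V)) (c : V × V → ℝ) (sk tk : D → V) (d : D → ℝ)
    (hd : ∀ k, 0 < d k) (hst : ∀ k, sk k ≠ tk k)
    (x : D → V × V → ℕ)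
    (hx01 : ∀ k e, x k e ≤ 1)
    (hcons : ∀ k (i : V),
      ∑ e ∈ L.filter (fun e => e.2 = i), (x k e : ℤ)
        - ∑ e ∈ L.filter (fun e => e.1 = i), (x k e : ℤ)
        = if i = sk k then -1 else if i = tk k then 1 else 0)
    (hacyc : ∀ k, ¬ ∃ C : List V, C ≠ [] ∧ C.Nodup ∧
      ∀ e ∈ C.zip (C.rotate 1), e ∈ L ∧ x k e = 1)
    (hcap : ∀ e ∈ L, ∑ k : D, d k * (x k e : ℝ) ≤ c e)
    (hsub : ∀ (s i : V), i ≠ s →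
      ∑ e ∈ L.filter (fun e => e.2 = i),
        (Finset.univ.filter (fun k => sk k = s)).sup (fun k => x k e) ≤ 1) :
    -- aggregated flow conservation
    (∀ (s i : V),
      ∑ e ∈ L.filter (fun e => e.2 = i),
          (∑ k ∈ Finset.univ.filter (fun k => sk k = s), d k * (x k e : ℝ))
        - ∑ e ∈ L.filter (fun e => e.1 = i),
          (∑ k ∈ Finset.univ.filter (fun k => sk k = s), d k * (x k e : ℝ))
        = (∑ k ∈ Finset.univ.filter (fun k => sk k = s ∧ tk k = i), d k)
          - (if i = s then ∑ k ∈ Finset.univ.filter (fun k => sk k = s), d k else 0))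
    -- flow bound constraints
    ∧ (∀ (s : V) (e : V × V),
        ∑ k ∈ Finset.univ.filter (fun k => sk k = s), d k * (x k e : ℝ)
          ≤ (((Finset.univ.filter (fun k => sk k = s)).sup (fun k => x k e) : ℕ) : ℝ)
            * ∑ k ∈ Finset.univ.filter (fun k => sk k = s), d k)
    -- capacity constraints
    ∧ (∀ e ∈ L,
        ∑ s : V, ∑ k ∈ Finset.univ.filter (fun k => sk k = s), d k * (x k e : ℝ) ≤ c e)
    -- in-degree (path uniqueness) constraints on y
    ∧ (∀ (s i : V),
        (i = s → ∑ e ∈ L.filter (fun e => e.2 = i),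
          (Finset.univ.filter (fun k => sk k = s)).sup (fun k => x k e) = 0)
        ∧ ((∃ k, sk k = s ∧ tk k = i) → ∑ e ∈ L.filter (fun e => e.2 = i),
            (Finset.univ.filter (fun k => sk k = s)).sup (fun k => x k e) = 1)
        ∧ (i ≠ s → ∑ e ∈ L.filter (fun e => e.2 = i),
            (Finset.univ.filter (fun k => sk k = s)).sup (fun k => x k e) ≤ 1)) := by
  have hflow : ∀ k, IsUnitFlow L (x k) (sk k) (tk k) := hcons
  refine ⟨fun s i => ?_, fun s e => sum_mul_le_sup_mul_sum _ (fun k _ => (hd k).le) _,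
    fun e he => (sum_fiberwise _ sk _).trans_le (hcap e he), fun s i => ⟨?_, ?_, hsub s i⟩⟩
  · refine (inflow_sub_outflow_sum_mul hflow hst d _ i).trans ?_
    rw [sum_sub_distrib, ← sum_filter, ← sum_filter, filter_filter, filter_filter]
    congr 1
    split_ifs with his
    · subst his
      simp only [and_self]
    · refine sum_eq_zero fun k hk => absurd ?_ his
      obtain ⟨-, hks, hki⟩ := mem_filter.1 hk
      exact hki.symm.trans hks
  · rintro rfl
    refine sum_eq_zero fun e he => ?_
    obtain ⟨heL, hei⟩ := mem_filter.1 he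
    refine Nat.eq_zero_of_le_zero (Finset.sup_le fun k hk => ?_)
    have hki : sk k = i := (mem_filter.1 hk).2
    exact ((hflow k).eq_zero_of_snd_eq_source (hx01 k) (hacyc k) heL (hei.trans hki.symm)).le
  · rintro ⟨k, rfl, rfl⟩
    refine le_antisymm (hsub _ _ (hst k).symm) ?_
    calc 1 ≤ inflow L (x k) (tk k) := (hflow k).one_le_inflow_target (hst k)
      _ ≤ _ := sum_le_sum fun e _ => le_sup (f := fun l => x l e) (by simp)

/-- From a feasible solution `x` of the relaxed demand-based model (per-demand acyclic
0-1 unit flows with conservation, capacity and sub-path optimality constraints), the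
aggregates `y s e = max_{k : sk k = s} x k e` and `f s e = ∑_{k : sk k = s} d k * x k e`
form a feasible solution of the relaxed origin-based model: aggregated flow conservation,
flow bounds `f ≤ y · d_s`, capacity constraints, and in-degree constraints on `y`. -/
theorem demand_to_origin_feasible {V D : Type} [Fintype V] [DecidableEq V] [Fintype D] [DecidableEq D]
    (L : Finset (V × V)) (c : V × V → ℝ) (sk tk : D → V) (d : D → ℝ)
    (hd : ∀ k, 0 < d k) (hst : ∀ k, sk k ≠ tk k)
    (x : D → V × V → ℕ)
    (hx01 : ∀ k e, x k e ≤ 1)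
    (hcons : ∀ k (i : V),
      ∑ e ∈ L.filter (fun e => e.2 = i), (x k e : ℤ)
        - ∑ e ∈ L.filter (fun e => e.1 = i), (x k e : ℤ)
        = if i = sk k then -1 else if i = tk k then 1 else 0)
    (hacyc : ∀ k, ¬ ∃ C : List V, C ≠ [] ∧ C.Nodup ∧
      ∀ e ∈ C.zip (C.rotate 1), e ∈ L ∧ x k e = 1)
    (hcap : ∀ e ∈ L, ∑ k : D, d k * (x k e : ℝ) ≤ c e)
    (hsub : ∀ (s i : V), i ≠ s →
      ∑ e ∈ L.filter (fun e => e.2 = i),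
        (Finset.univ.filter (fun k => sk k = s)).sup (fun k => x k e) ≤ 1) :
    -- aggregated flow conservation
    (∀ (s i : V),
      ∑ e ∈ L.filter (fun e => e.2 = i),
          (∑ k ∈ Finset.univ.filter (fun k => sk k = s), d k * (x k e : ℝ))
        - ∑ e ∈ L.filter (fun e => e.1 = i),
          (∑ k ∈ Finset.univ.filter (fun k => sk k = s), d k * (x k e : ℝ))
        = (∑ k ∈ Finset.univ.filter (fun k => sk k = s ∧ tk k = i), d k)
          - (if i = s then ∑ k ∈ Finset.univ.filter (fun k => sk k = s), d k else 0))
    -- flow bound constraints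
    ∧ (∀ (s : V) (e : V × V),
        ∑ k ∈ Finset.univ.filter (fun k => sk k = s), d k * (x k e : ℝ)
          ≤ (((Finset.univ.filter (fun k => sk k = s)).sup (fun k => x k e) : ℕ) : ℝ)
            * ∑ k ∈ Finset.univ.filter (fun k => sk k = s), d k)
    -- capacity constraints
    ∧ (∀ e ∈ L,
        ∑ s : V, ∑ k ∈ Finset.univ.filter (fun k => sk k = s), d k * (x k e : ℝ) ≤ c e)
    -- in-degree (path uniqueness) constraints on y
    ∧ (∀ (s i : V),
        (i = s → ∑ e ∈ L.filter (fun e => e.2 = i),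
          (Finset.univ.filter (fun k => sk k = s)).sup (fun k => x k e) = 0)
        ∧ ((∃ k, sk k = s ∧ tk k = i) → ∑ e ∈ L.filter (fun e => e.2 = i),
            (Finset.univ.filter (fun k => sk k = s)).sup (fun k => x k e) = 1)
        ∧ (i ≠ s → ∑ e ∈ L.filter (fun e => e.2 = i),
            (Finset.univ.filter (fun k => sk k = s)).sup (fun k => x k e) ≤ 1)) :=
  demand_to_origin_feasible_general L c sk tk d hd hst x hx01 hcons hacyc hcap hsub
end

section
/- Given a feasible solution (y,f) to the relaxed origin-based model, define x(k,e) for each demand k by tracing back from t_k along the unique y(s_k,·)-selected incoming edges until reaching s_k, setting x(k,e) = 1 exactly on the traced edges. Then x is a feasible solution to the relaxed demand-based model: each x(k,·) satisfies unit flow conservation from s_k to t_k, ∑_k d_k·x(k,e) ≤ ∑_s f(s,e) ≤ c(e) for every edge e, and the sub-path optimality constraints ∑_{(h,i)} max_{k ∈ D_s} x(k,(h,i)) ≤ 1 for all i ≠ s hold. -/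
/-!
Fix an origin `s`. The edges selected by `y s` never enter `s` and enter every other node at
most once, and `f s` lives on selected edges. Summing flow conservation over a node set `T` not
containing `s` shows that the demand inside `T` is at most the flow entering `T`. For `T` the
set of nodes not reachable from `s` along selected edges nothing enters `T`, so every destination
is reachable, and a simple selected path from `s_k` to `t_k` defines `x k`. For `T` the set of
nodes reachable from the head of a selected edge `e`, only `e` enters `T`, so `f s e` bounds the
demand of all destinations whose path uses `e`; summing over origins gives the capacity bound.
-/

open Relation

namespace List

variable {α β : Type*} {r : α → α → Prop}

theorem isChain_iff_forall_mem_zip_tail {l : List α} :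
    l.IsChain r ↔ ∀ e ∈ l.zip l.tail, r e.1 e.2 := by
  induction l with
  | nil => simp
  | cons a l ih => cases l with
    | nil => simp
    | cons b l => simp_all [isChain_cons_cons]

theorem map_fst_zip_tail (l : List α) : (l.zip l.tail).map Prod.fst = l.dropLast := by
  induction l with
  | nil => rfl
  | cons a l ih => cases l with
    | nil => rfl
    | cons b l => simp_all

theorem map_snd_zip_tail (l : List α) : (l.zip l.tail).map Prod.snd = l.tail :=
  map_snd_zip (by simp)

theorem IsChain.reflTransGen_getLast {l : List α} (hl : l.IsChain r) {b : α}
    (hb : l.getLast? = some b) : ∀ a ∈ l, ReflTransGen r a b :=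
  hl.backwards_induction _ _ (fun _ _ h => ReflTransGen.head h)
    (fun hne => by rw [getLast?_eq_some_getLast hne, Option.some_inj] at hb; exact hb ▸ .refl)

theorem exists_nodup_isChain_of_reflTransGen {a b : α} (h : ReflTransGen r a b) :
    ∃ l : List α, l.head? = some a ∧ l.getLast? = some b ∧ l.Nodup ∧ l.IsChain r := by
  induction h with
  | refl => exact ⟨[a], rfl, rfl, nodup_singleton a, .singleton a⟩
  | @tail b c _ hbc ih =>
    obtain ⟨l, ha, hb, hnd, hch⟩ := ih
    by_cases hc : c ∈ l
    · obtain ⟨q, t, rfl⟩ := append_of_mem hc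
      have hpre : q ++ [c] <+: q ++ c :: t := by simp
      refine ⟨q ++ [c], ?_, getLast?_concat, hnd.sublist hpre.sublist, hch.prefix hpre⟩
      cases q <;> simp_all
    · refine ⟨l ++ [c], by simp [head?_append, ha], getLast?_concat, ?_, ?_⟩
      · exact nodup_append.mpr ⟨hnd, nodup_singleton c, by grind⟩
      · exact hch.append (.singleton c) (by simp [hb, hbc])

theorem sum_indicator_filter_eq_count [DecidableEq α] [DecidableEq β] {L : Finset α}
    {l : List α} [DecidablePred (· ∈ l)] (hl : l.Nodup) (hlL : ∀ e ∈ l, e ∈ L) (π : α → β)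
    (i : β) :
    ∑ e ∈ L.filter (π · = i), (if e ∈ l then (1 : ℤ) else 0) = (l.map π).count i := by
  have hset : (L.filter (π · = i)).filter (· ∈ l) = (l.filter (π · == i)).toFinset := by
    ext e; simp only [Finset.mem_filter, mem_toFinset, mem_filter, beq_iff_eq]; grind
  rw [Finset.sum_boole, hset, toFinset_card_of_nodup (hl.filter _), count_eq_countP, countP_map,
    countP_eq_length_filter]
  rfl

end List

open Finset

theorem Finset.eq_of_sum_le_one {α : Type*} [DecidableEq α] {S : Finset α} {g : α → ℕ}
    (hS : ∑ x ∈ S, g x ≤ 1) {a b : α} (ha : a ∈ S) (hb : b ∈ S) (hga : g a = 1)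
    (hgb : g b = 1) : a = b := by
  by_contra hab
  have := sum_le_sum_of_subset (f := g) (insert_subset ha (singleton_subset_iff.mpr hb))
  rw [sum_pair hab] at this
  omega

namespace EdgeFlow

variable {V : Type*} [DecidableEq V] (L : Finset (V × V))

def netInflow {M : Type*} [AddCommGroup M] (φ : V × V → M) (i : V) : M :=
  ∑ e ∈ L.filter (·.2 = i), φ e - ∑ e ∈ L.filter (·.1 = i), φ e

theorem netInflow_indicator_zip_tail {p : List V} {a b : V} (hp : p.Nodup)
    (ha : p.head? = some a) (hb : p.getLast? = some b) (hab : a ≠ b)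
    (hpL : ∀ e ∈ p.zip p.tail, e ∈ L) (i : V) :
    netInflow L (fun e => if e ∈ p.zip p.tail then (1 : ℤ) else 0) i
      = if i = a then -1 else if i = b then 1 else 0 := by
  have hzp : (p.zip p.tail).Nodup :=
    List.Nodup.of_map Prod.snd (by rw [List.map_snd_zip_tail]; exact hp.tail)
  rw [netInflow, List.sum_indicator_filter_eq_count hzp hpL Prod.snd,
    List.sum_indicator_filter_eq_count hzp hpL Prod.fst, List.map_snd_zip_tail,
    List.map_fst_zip_tail, hp.tail.count, (hp.sublist (List.dropLast_sublist p)).count]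
  obtain ⟨t, rfl⟩ := List.head?_eq_some_iff.mp ha
  obtain ⟨q, hq⟩ := List.getLast?_eq_some_iff.mp hb
  rw [List.tail_cons, hq, List.dropLast_concat]
  rw [hq] at hp
  grind

def entering (T : Finset V) : Finset (V × V) := L.filter fun e => e.1 ∉ T ∧ e.2 ∈ T

@[simp]
theorem mem_entering {T : Finset V} {e : V × V} : e ∈ entering L T ↔ e ∈ L ∧ e.1 ∉ T ∧ e.2 ∈ T :=
  mem_filter

theorem sum_netInflow_le_sum_entering {φ : V × V → ℝ} (hφ : ∀ e, 0 ≤ φ e) (T : Finset V) :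
    ∑ i ∈ T, netInflow L φ i ≤ ∑ e ∈ entering L T, φ e := by
  have hend : ∀ π : V × V → V, ∑ i ∈ T, ∑ e ∈ L.filter (π · = i), φ e
      = ∑ e ∈ L, if π e ∈ T then φ e else 0 := fun π => by
    simp only [sum_filter]
    rw [sum_comm]
    exact sum_congr rfl fun e _ => sum_ite_eq T (π e) fun _ => φ e
  simp only [netInflow]
  rw [sum_sub_distrib, hend, hend, ← sum_sub_distrib, entering, sum_filter]
  exact sum_le_sum fun e _ => by split_ifs <;> grind

def Selected (g : V × V → ℕ) (u v : V) : Prop := (u, v) ∈ L ∧ g (u, v) = 1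

variable {L} {g : V × V → ℕ} {φ : V × V → ℝ} {b : V → ℝ} {s : V}

theorem reflTransGen_selected_of_demand_pos [Fintype V] (hφ : ∀ e, 0 ≤ φ e)
    (hsupp : ∀ e, 0 < φ e → g e = 1) (hbal : ∀ i, i ≠ s → netInflow L φ i = b i)
    (hb : ∀ i, 0 ≤ b i) {t : V} (ht : 0 < b t) : ReflTransGen (Selected L g) s t := by
  classical
  by_contra hst
  set T := univ.filter fun j => ¬ ReflTransGen (Selected L g) s j
  have hsT : s ∉ T := by simp [T, ReflTransGen.refl]
  have hentering : ∀ e ∈ entering L T, φ e = 0 := by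
    intro e he
    simp only [T, mem_entering, mem_filter, mem_univ, true_and, not_not] at he
    by_contra hne
    exact he.2.2 (he.2.1.tail ⟨he.1, hsupp e ((hφ e).lt_of_ne' hne)⟩)
  have hT : ∑ i ∈ T, b i ≤ 0 := calc
    ∑ i ∈ T, b i = ∑ i ∈ T, netInflow L φ i :=
      sum_congr rfl fun i hi => (hbal i (ne_of_mem_of_not_mem hi hsT)).symm
    _ ≤ ∑ e ∈ entering L T, φ e := sum_netInflow_le_sum_entering L hφ T
    _ = 0 := sum_eq_zero hentering
  have := single_le_sum (fun i _ => hb i) (show t ∈ T by simpa [T] using hst)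
  linarith

theorem selected_eq_of_snd_eq (hin : ∀ i, i ≠ s → ∑ e ∈ L.filter (·.2 = i), g e ≤ 1)
    {e e' : V × V} (he : e ∈ L) (he' : e' ∈ L) (hge : g e = 1) (hge' : g e' = 1)
    (hsnd : e'.2 = e.2) (hs : e.2 ≠ s) : e' = e :=
  Finset.eq_of_sum_le_one (hin _ hs) (mem_filter.mpr ⟨he', hsnd⟩) (mem_filter.mpr ⟨he, rfl⟩)
    hge' hge

theorem not_reflTransGen_selected_source (hs : ∑ e ∈ L.filter (·.2 = s), g e = 0) {w : V}
    (hw : w ≠ s) : ¬ ReflTransGen (Selected L g) w s := fun h => by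
  rcases h.cases_tail with rfl | ⟨u, -, hL, hg⟩
  · exact hw rfl
  · have := (sum_eq_zero_iff.mp hs) (u, s) (mem_filter.mpr ⟨hL, rfl⟩)
    omega

theorem sum_demand_le_of_reflTransGen [Fintype V] (hφ : ∀ e, 0 ≤ φ e)
    (hsupp : ∀ e, 0 < φ e → g e = 1) (hbal : ∀ i, i ≠ s → netInflow L φ i = b i)
    (hb : ∀ i, 0 ≤ b i) (hs : ∑ e ∈ L.filter (·.2 = s), g e = 0)
    (hin : ∀ i, i ≠ s → ∑ e ∈ L.filter (·.2 = i), g e ≤ 1)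
    {e : V × V} (he : e ∈ L) (hge : g e = 1) (hes : e.2 ≠ s)
    {T : Finset V} (hT : ∀ j ∈ T, ReflTransGen (Selected L g) e.2 j) :
    ∑ j ∈ T, b j ≤ φ e := by
  classical
  set B := univ.filter (ReflTransGen (Selected L g) e.2)
  have hsB : s ∉ B := by simpa [B] using not_reflTransGen_selected_source hs hes
  have hentering : ∀ e' ∈ entering L B, φ e' ≠ 0 → e' = e := by
    intro e' he' hne
    simp only [B, mem_entering, mem_filter, mem_univ, true_and] at he'
    obtain ⟨he'L, hout, hin'⟩ := he'
    have hge' := hsupp e' ((hφ e').lt_of_ne' hne)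
    rcases hin'.cases_tail with h | ⟨u, hu, huL, hug⟩
    · exact selected_eq_of_snd_eq hin he he'L hge hge' h hes
    · have hs' : e'.2 ≠ s := fun h => hsB (h ▸ by simpa [B] using hin')
      have := selected_eq_of_snd_eq hin huL he'L hug hge' rfl hs'
      exact absurd (this ▸ hu) hout
  calc ∑ j ∈ T, b j ≤ ∑ j ∈ B, b j :=
        sum_le_sum_of_subset_of_nonneg (fun j hj => by simpa [B] using hT j hj) fun j _ _ => hb j
    _ = ∑ j ∈ B, netInflow L φ j :=
        sum_congr rfl fun j hj => (hbal j (ne_of_mem_of_not_mem hj hsB)).symm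
    _ ≤ ∑ e' ∈ entering L B, φ e' := sum_netInflow_le_sum_entering L hφ B
    _ = ∑ e' ∈ (entering L B).filter (φ · ≠ 0), φ e' :=
        sum_filter_ne_zero _ |>.symm
    _ ≤ ∑ e' ∈ {e}, φ e' :=
        sum_le_sum_of_subset_of_nonneg (fun e' he' => by
          rw [mem_filter] at he'; exact mem_singleton.mpr (hentering e' he'.1 he'.2))
          fun e' _ _ => hφ e'
    _ = φ e := sum_singleton _ _

theorem sum_demand_through_edge_le {D : Type*} [Fintype V] (hφ : ∀ e, 0 ≤ φ e)
    (hsupp : ∀ e, 0 < φ e → g e = 1) (hs : ∑ e ∈ L.filter (·.2 = s), g e = 0)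
    (hin : ∀ i, i ≠ s → ∑ e ∈ L.filter (·.2 = i), g e ≤ 1)
    {K : Finset D} {t : D → V} {d : D → ℝ} (hd : ∀ k ∈ K, 0 ≤ d k)
    (hbal : ∀ i, i ≠ s → netInflow L φ i = ∑ k ∈ K.filter (t · = i), d k)
    {P : D → List V} (hP : ∀ k ∈ K, (P k).head? = some s ∧ (P k).getLast? = some (t k) ∧
      (P k).Nodup ∧ (P k).IsChain (Selected L g))
    {e : V × V} (he : e ∈ L) :
    ∑ k ∈ K.filter (fun k => e ∈ (P k).zip (P k).tail), d k ≤ φ e := by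
  set K' := K.filter (fun k => e ∈ (P k).zip (P k).tail)
  rcases K'.eq_empty_or_nonempty with hK' | ⟨k₀, hk₀⟩
  · rw [hK', sum_empty]; exact hφ e
  obtain ⟨hk₀K, hek₀⟩ := mem_filter.mp hk₀
  obtain ⟨hhead, -, hnodup, hchain⟩ := hP k₀ hk₀K
  have hge : g e = 1 := (List.isChain_iff_forall_mem_zip_tail.mp hchain e hek₀).2
  have hes : e.2 ≠ s := by
    obtain ⟨l, hl⟩ := List.head?_eq_some_iff.mp hhead
    rw [hl] at hnodup hek₀
    exact fun h => (List.nodup_cons.mp hnodup).1 (h ▸ (List.of_mem_zip hek₀).2)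
  have hdesc : ∀ j ∈ K'.image t, ReflTransGen (Selected L g) e.2 j := by
    simp only [mem_image, K', mem_filter]
    rintro _ ⟨k, ⟨hk, hek⟩, rfl⟩
    obtain ⟨-, hlast, -, hchain⟩ := hP k hk
    exact hchain.reflTransGen_getLast hlast _ (List.mem_of_mem_tail (List.of_mem_zip hek).2)
  calc ∑ k ∈ K', d k = ∑ j ∈ K'.image t, ∑ k ∈ K'.filter (t · = j), d k :=
        (sum_fiberwise_of_maps_to (fun k hk => mem_image_of_mem t hk) d).symm
    _ ≤ ∑ j ∈ K'.image t, ∑ k ∈ K.filter (t · = j), d k :=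
        sum_le_sum fun j _ => sum_le_sum_of_subset_of_nonneg
          (filter_subset_filter _ (filter_subset _ K)) fun k hk _ => hd k (mem_filter.mp hk).1
    _ ≤ φ e := sum_demand_le_of_reflTransGen hφ hsupp hbal
        (fun i => sum_nonneg fun k hk => hd k (mem_filter.mp hk).1) hs hin he hge hes hdesc

end EdgeFlow

theorem origin_to_demand_feasible_general {V D : Type} [Fintype V] [DecidableEq V] [Fintype D]
    (L : Finset (V × V)) (c : V × V → ℝ)
    (sk tk : D → V) (d : D → ℝ) (hd : ∀ k, 0 < d k) (hst : ∀ k, sk k ≠ tk k)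
    (y : V → V × V → ℕ) (f : V → V × V → ℝ)
    (hy01 : ∀ s e, y s e ≤ 1) (hf0 : ∀ s e, 0 ≤ f s e)
    (hfb : ∀ s e, f s e ≤ (y s e : ℝ) * ∑ k ∈ Finset.univ.filter (fun k => sk k = s), d k)
    (hcons : ∀ (s i : V),
      ∑ e ∈ L.filter (fun e => e.2 = i), f s e - ∑ e ∈ L.filter (fun e => e.1 = i), f s e
        = (∑ k ∈ Finset.univ.filter (fun k => sk k = s ∧ tk k = i), d k)
          - (if i = s then ∑ k ∈ Finset.univ.filter (fun k => sk k = s), d k else 0))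
    (hcap : ∀ e ∈ L, ∑ s : V, f s e ≤ c e)
    (hpu : ∀ (s i : V),
      (i = s → ∑ e ∈ L.filter (fun e => e.2 = i), y s e = 0)
      ∧ ((∃ k, sk k = s ∧ tk k = i) → ∑ e ∈ L.filter (fun e => e.2 = i), y s e = 1)
      ∧ (i ≠ s → ∑ e ∈ L.filter (fun e => e.2 = i), y s e ≤ 1)) :
    ∃ x : D → V × V → ℕ,
      -- x k is the indicator of a traced y-path from sk k to tk k
      (∀ k, ∃ p : List V, p.head? = some (sk k) ∧ p.getLast? = some (tk k) ∧ p.Nodup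
        ∧ (∀ e ∈ p.zip p.tail, e ∈ L ∧ y (sk k) e = 1)
        ∧ (∀ e, x k e = if e ∈ p.zip p.tail then 1 else 0))
      -- unit flow conservation for each demand
      ∧ (∀ k (i : V),
          ∑ e ∈ L.filter (fun e => e.2 = i), (x k e : ℤ)
            - ∑ e ∈ L.filter (fun e => e.1 = i), (x k e : ℤ)
          = if i = sk k then -1 else if i = tk k then 1 else 0)
      -- capacity via the aggregated flow
      ∧ (∀ e ∈ L, ∑ k : D, d k * (x k e : ℝ) ≤ ∑ s : V, f s e)
      ∧ (∀ e ∈ L, ∑ s : V, f s e ≤ c e)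
      -- sub-path optimality constraints
      ∧ (∀ (s i : V), i ≠ s →
          ∑ e ∈ L.filter (fun e => e.2 = i),
            (Finset.univ.filter (fun k => sk k = s)).sup (fun k => x k e) ≤ 1) := by
  have hsupp : ∀ s e, 0 < f s e → y s e = 1 := fun s e hpos => by
    rcases Nat.le_one_iff_eq_zero_or_eq_one.mp (hy01 s e) with h | h
    · have := hfb s e; simp only [h, CharP.cast_eq_zero, zero_mul] at this; linarith
    · exact h
  have hbal : ∀ s i, i ≠ s → EdgeFlow.netInflow L (f s) i
      = ∑ k ∈ (univ.filter (sk · = s)).filter (tk · = i), d k := fun s i hi => by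
    simpa [EdgeFlow.netInflow, filter_filter, hi] using hcons s i
  have hpath : ∀ k, ∃ p : List V, p.head? = some (sk k) ∧ p.getLast? = some (tk k) ∧ p.Nodup ∧
      p.IsChain (EdgeFlow.Selected L (y (sk k))) := fun k =>
    List.exists_nodup_isChain_of_reflTransGen <|
      EdgeFlow.reflTransGen_selected_of_demand_pos (hf0 _) (hsupp _) (hbal _)
        (fun _ => sum_nonneg fun k _ => (hd k).le)
        (sum_pos (fun k _ => hd k) ⟨k, by simp⟩)
  choose P hhead hlast hnodup hchain using hpath
  have hPL : ∀ k, ∀ e ∈ (P k).zip (P k).tail, e ∈ L ∧ y (sk k) e = 1 := fun k =>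
    List.isChain_iff_forall_mem_zip_tail.mp (hchain k)
  refine ⟨fun k e => if e ∈ (P k).zip (P k).tail then 1 else 0,
    fun k => ⟨P k, hhead k, hlast k, hnodup k, hPL k, fun e => rfl⟩, fun k i => ?_,
    fun e he => ?_, hcap, fun s i hi => ?_⟩
  · push_cast
    exact EdgeFlow.netInflow_indicator_zip_tail L (hnodup k) (hhead k) (hlast k) (hst k)
      (fun e he => (hPL k e he).1) i
  · calc ∑ k, d k * ((if e ∈ (P k).zip (P k).tail then 1 else 0 : ℕ) : ℝ)
        = ∑ k ∈ univ.filter (fun k => e ∈ (P k).zip (P k).tail), d k := by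
          simp [sum_filter]
      _ = ∑ s, ∑ k ∈ (univ.filter (fun k => e ∈ (P k).zip (P k).tail)).filter (sk · = s), d k :=
          (sum_fiberwise _ sk d).symm
      _ ≤ ∑ s, f s e := sum_le_sum fun s _ => by
          rw [filter_comm]
          exact EdgeFlow.sum_demand_through_edge_le (hf0 s) (hsupp s) ((hpu s s).1 rfl)
            (fun i => (hpu s i).2.2) (fun k _ => (hd k).le) (hbal s)
            (fun k hk => (mem_filter.mp hk).2 ▸ ⟨hhead k, hlast k, hnodup k, hchain k⟩) he
  · refine (sum_le_sum fun e _ => Finset.sup_le fun k hk => ?_).trans ((hpu s i).2.2 hi)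
    dsimp only
    split_ifs with he
    · exact ((mem_filter.mp hk).2 ▸ (hPL k e he).2).ge
    · exact Nat.zero_le _

/-- From a feasible solution `(y, f)` of the relaxed origin-based model one obtains a
feasible solution `x` of the relaxed demand-based model: for each demand `k`, `x k` is
the 0-1 indicator of the path from `sk k` to `tk k` traced back along `y (sk k)`-selected
edges; `x` satisfies unit flow conservation for every demand, the weighted flow is
bounded edgewise by the aggregated flow (hence by the capacity), and the sub-path
optimality constraints hold. -/
theorem origin_to_demand_feasible {V D : Type} [Fintype V] [DecidableEq V]
    [Fintype D] [DecidableEq D]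
    (L : Finset (V × V)) (c : V × V → ℝ)
    (sk tk : D → V) (d : D → ℝ) (hd : ∀ k, 0 < d k) (hst : ∀ k, sk k ≠ tk k)
    (y : V → V × V → ℕ) (f : V → V × V → ℝ)
    (hy01 : ∀ s e, y s e ≤ 1) (hf0 : ∀ s e, 0 ≤ f s e)
    (hfb : ∀ s e, f s e ≤ (y s e : ℝ) * ∑ k ∈ Finset.univ.filter (fun k => sk k = s), d k)
    (hcons : ∀ (s i : V),
      ∑ e ∈ L.filter (fun e => e.2 = i), f s e - ∑ e ∈ L.filter (fun e => e.1 = i), f s e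
        = (∑ k ∈ Finset.univ.filter (fun k => sk k = s ∧ tk k = i), d k)
          - (if i = s then ∑ k ∈ Finset.univ.filter (fun k => sk k = s), d k else 0))
    (hcap : ∀ e ∈ L, ∑ s : V, f s e ≤ c e)
    (hpu : ∀ (s i : V),
      (i = s → ∑ e ∈ L.filter (fun e => e.2 = i), y s e = 0)
      ∧ ((∃ k, sk k = s ∧ tk k = i) → ∑ e ∈ L.filter (fun e => e.2 = i), y s e = 1)
      ∧ (i ≠ s → ∑ e ∈ L.filter (fun e => e.2 = i), y s e ≤ 1)) :
    ∃ x : D → V × V → ℕ,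
      -- x k is the indicator of a traced y-path from sk k to tk k
      (∀ k, ∃ p : List V, p.head? = some (sk k) ∧ p.getLast? = some (tk k) ∧ p.Nodup
        ∧ (∀ e ∈ p.zip p.tail, e ∈ L ∧ y (sk k) e = 1)
        ∧ (∀ e, x k e = if e ∈ p.zip p.tail then 1 else 0))
      -- unit flow conservation for each demand
      ∧ (∀ k (i : V),
          ∑ e ∈ L.filter (fun e => e.2 = i), (x k e : ℤ)
            - ∑ e ∈ L.filter (fun e => e.1 = i), (x k e : ℤ)
          = if i = sk k then -1 else if i = tk k then 1 else 0)
      -- capacity via the aggregated flow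
      ∧ (∀ e ∈ L, ∑ k : D, d k * (x k e : ℝ) ≤ ∑ s : V, f s e)
      ∧ (∀ e ∈ L, ∑ s : V, f s e ≤ c e)
      -- sub-path optimality constraints
      ∧ (∀ (s i : V), i ≠ s →
          ∑ e ∈ L.filter (fun e => e.2 = i),
            (Finset.univ.filter (fun k => sk k = s)).sup (fun k => x k e) ≤ 1) :=
  origin_to_demand_feasible_general L c sk tk d hd hst y f hy01 hf0 hfb hcons hcap hpu
end
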